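/- Let R be a finite Frobenius ring, g, h ∈ R^k nonzero with h ∉ gR. Then Σ_{x ∈ R^k} w_hom(x·g)·w_hom(x·h) = |R|^k. -/

import Mathlib

open scoped Classical

/-- The normalized homogeneous weight defined from an additive character. -/
noncomputable def whom {R : Type} [Ring R] [Fintype R] (χ : AddChar R ℂ) (x : R) : ℂ :=
  1 - (Fintype.card Rˣ : ℂ)⁻¹ * ∑ u : Rˣ, χ ((u : R) * x)

/-- A generating character: a character of `(R,+)` whose kernel contains no
nonzero left ideal. -/
def IsGenChar {R : Type} [Ring R] [Fintype R] (χ : AddChar R ℂ) : Prop :=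
  ∀ I : Ideal R, I ≠ ⊥ → ∃ x ∈ I, χ x ≠ 1

/-!
A generating character turns left multiplication by a unit into right multiplication by a
unit: `χ (u * a) = χ (a * σ u)` for some `σ u : Rˣ`. Writing `w_hom` through this, the product
`w_hom (x·g) * w_hom (x·h)` expands into `1` plus character sums `∑ₓ χ (x·z)` with
`z = g σ(u)`, `z = h σ(v)` or `z = g σ(u) + h σ(v)`. All these `z` are nonzero (the last one
because `h ∉ gR`), and `x ↦ χ (x·z)` is then a nontrivial character of `R^k`, so only the
constant term `|R|^k` survives.
-/

open Matrix

namespace AddChar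

variable {R M : Type*} [Ring R] [CommMonoid M]

def mulShiftRight (ψ : AddChar R M) (c : R) : AddChar R M :=
  ψ.compAddMonoidHom (AddMonoidHom.mulRight c)

@[simp] theorem mulShiftRight_apply {ψ : AddChar R M} {c a : R} :
    ψ.mulShiftRight c a = ψ (a * c) :=
  rfl

end AddChar

theorem Matrix.dotProduct_mul_right {ι R : Type*} [Fintype ι] [NonUnitalSemiring R]
    (x z : ι → R) (c : R) : x ⬝ᵥ z * c = x ⬝ᵥ fun i => z i * c := by
  simp only [dotProduct, Finset.sum_mul, mul_assoc]

theorem whom_dotProduct_eq {R : Type} [Ring R] [Fintype R] {χ : AddChar R ℂ} {ι : Type*}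
    [Fintype ι] {σ : Rˣ → Rˣ} (hσ : ∀ u : Rˣ, χ.mulShift u = χ.mulShiftRight (σ u))
    (x z : ι → R) :
    whom χ (x ⬝ᵥ z) =
      1 - (Fintype.card Rˣ : ℂ)⁻¹ * ∑ u, χ (x ⬝ᵥ fun i => z i * σ u) := by
  simp only [whom, ← dotProduct_mul_right, ← AddChar.mulShiftRight_apply, ← hσ,
    AddChar.mulShift_apply]

namespace IsGenChar

open AddChar

variable {R : Type} [Ring R] [Fintype R] {χ : AddChar R ℂ}

theorem eq_zero_of_forall_mul_left (hχ : IsGenChar χ) {a : R} (ha : ∀ r, χ (r * a) = 1) :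
    a = 0 := by
  by_contra ha0
  obtain ⟨x, hx, hχx⟩ :=
    hχ (Ideal.span {a}) (by simpa [Ideal.span_singleton_eq_bot] using ha0)
  obtain ⟨r, rfl⟩ := Ideal.mem_span_singleton'.mp hx
  exact hχx (ha r)

theorem mulShiftRight_injective (hχ : IsGenChar χ) : Function.Injective χ.mulShiftRight := by
  intro c d hcd
  refine sub_eq_zero.mp (hχ.eq_zero_of_forall_mul_left fun r => ?_)
  have hr : χ (r * c) = χ (r * d) := DFunLike.congr_fun hcd r
  rw [mul_sub, sub_eq_add_neg, map_add_eq_mul, hr, ← map_add_eq_mul, add_neg_cancel,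
    map_zero_eq_one]

theorem mulShiftRight_bijective (hχ : IsGenChar χ) : Function.Bijective χ.mulShiftRight :=
  (Fintype.bijective_iff_injective_and_card _).mpr
    ⟨hχ.mulShiftRight_injective, AddChar.card_eq.symm⟩

theorem exists_unit_mulShift_eq (hχ : IsGenChar χ) (u : Rˣ) :
    ∃ c : Rˣ, χ.mulShift u = χ.mulShiftRight c := by
  obtain ⟨c, hc⟩ := hχ.mulShiftRight_bijective.2 (χ.mulShift u)
  obtain ⟨d, hd⟩ := hχ.mulShiftRight_bijective.2 (χ.mulShift ↑u⁻¹)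
  have hcd : c * d = 1 := hχ.mulShiftRight_injective <| DFunLike.ext _ _ fun a => by
    have hca := DFunLike.congr_fun hc (↑u⁻¹ * a)
    have hda := DFunLike.congr_fun hd (a * c)
    simp only [mulShiftRight_apply, mulShift_apply, Units.mul_inv_cancel_left] at hca hda
    rw [mulShiftRight_apply, mulShiftRight_apply, mul_one, ← mul_assoc, hda, ← mul_assoc, hca]
  -- a one-sided inverse in the finite ring `R` is two-sided
  exact ⟨⟨c, d, hcd, mul_eq_one_symm hcd⟩, hc.symm⟩

theorem sum_dotProduct_eq_zero (hχ : IsGenChar χ) {ι : Type*} [Fintype ι] [DecidableEq ι]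
    {z : ι → R} (hz : z ≠ 0) : ∑ x : ι → R, χ (x ⬝ᵥ z) = 0 := by
  let ψ : AddChar (ι → R) ℂ :=
    χ.compAddMonoidHom (AddMonoidHom.mk' (· ⬝ᵥ z) fun x y => add_dotProduct x y z)
  suffices ψ ≠ 0 from sum_eq_zero_iff_ne_zero.mpr this
  intro hψ
  obtain ⟨i, hi⟩ := Function.ne_iff.mp hz
  refine hi (hχ.eq_zero_of_forall_mul_left fun r => ?_)
  simpa [ψ, single_dotProduct] using DFunLike.congr_fun hψ (Pi.single i r)

theorem sum_sum_dotProduct_eq_zero (hχ : IsGenChar χ) {ι κ : Type*} [Fintype ι]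
    [DecidableEq ι] [Fintype κ] {z : κ → ι → R} (hz : ∀ j, z j ≠ 0) :
    ∑ x : ι → R, ∑ j, χ (x ⬝ᵥ z j) = 0 := by
  rw [Finset.sum_comm]
  exact Finset.sum_eq_zero fun j _ => hχ.sum_dotProduct_eq_zero (hz j)

end IsGenChar

open Matrix AddChar in
/-- For nonzero `g, h ∈ R^k` with `h ∉ gR`:
`Σ_{x ∈ R^k} w_hom(x·g)·w_hom(x·h) = |R|^k`. -/
theorem sum_whom_dot_of_not_assoc {R : Type} [Ring R] [Fintype R]
    (χ : AddChar R ℂ) (hχ : IsGenChar χ)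
    (k : ℕ) (g h : Fin k → R) (hg : g ≠ 0) (hh : h ≠ 0)
    (hgh : ¬ ∃ r : R, h = fun i => g i * r) :
    ∑ x : Fin k → R,
        whom χ (∑ i, x i * g i) * whom χ (∑ i, x i * h i) =
      (Fintype.card R : ℂ) ^ k := by
  choose σ hσ using hχ.exists_unit_mulShift_eq
  let shift (z : Fin k → R) (u : Rˣ) : Fin k → R := fun i => z i * σ u
  have shift_ne_zero {z : Fin k → R} (hz : z ≠ 0) (u : Rˣ) : shift z u ≠ 0 := fun h0 =>
    hz <| funext fun i => by simpa [shift] using congr_fun h0 i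
  have shift_add_ne_zero (u v : Rˣ) : shift g u + shift h v ≠ 0 := fun h0 =>
    hgh ⟨-(σ u * ↑(σ v)⁻¹), funext fun i => by
      rw [mul_neg, ← mul_assoc, ← neg_mul, Units.eq_mul_inv_iff_mul_eq]
      exact eq_neg_of_add_eq_zero_right (congr_fun h0 i)⟩
  have expand (x : Fin k → R) : whom χ (x ⬝ᵥ g) * whom χ (x ⬝ᵥ h) =
      1 - (Fintype.card Rˣ : ℂ)⁻¹ * ∑ u, χ (x ⬝ᵥ shift g u)
        - (Fintype.card Rˣ : ℂ)⁻¹ * ∑ v, χ (x ⬝ᵥ shift h v)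
        + (Fintype.card Rˣ : ℂ)⁻¹ ^ 2
          * ∑ u, ∑ v, χ (x ⬝ᵥ (shift g u + shift h v)) := by
    simp only [whom_dotProduct_eq hσ, dotProduct_add, map_add_eq_mul, ← Finset.sum_mul_sum]
    ring
  have sum_quadratic : ∑ x, ∑ u, ∑ v, χ (x ⬝ᵥ (shift g u + shift h v)) = 0 := by
    rw [Finset.sum_comm]
    exact Finset.sum_eq_zero fun u _ => hχ.sum_sum_dotProduct_eq_zero (shift_add_ne_zero u)
  change ∑ x, whom χ (x ⬝ᵥ g) * whom χ (x ⬝ᵥ h) = _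
  simp only [expand, Finset.sum_add_distrib, Finset.sum_sub_distrib, ← Finset.mul_sum,
    hχ.sum_sum_dotProduct_eq_zero (shift_ne_zero hg),
    hχ.sum_sum_dotProduct_eq_zero (shift_ne_zero hh),
    sum_quadratic]
  simp
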